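/- Let θ be an inner function and let R_n h = θh + Σ_{i=1}^n ⟨h, u_i⟩ v_i be a rank-n perturbation of the multiplication operator T_θ on H^2, with {u_i} orthonormal and {v_i} orthogonal. Then Ker R_n is nearly S*-invariant with defect at most n, with defect space F = span{T_{θ̄}(S* v_i) : 1 ≤ i ≤ n}: for every h ∈ Ker R_n with h(0) = 0, setting w = Σ_{k=1}^n ⟨h, u_k⟩ T_{θ̄}(S* v_k), one has S*h + w ∈ Ker R_n. -/

import Mathlib

open MeasureTheory Complex Real ComplexConjugate
open scoped ENNReal

noncomputable section

instance : Fact (0 < 2 * π) := ⟨by positivity⟩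

/-- The unit circle, modelled as `ℝ / 2πℤ`. -/
abbrev UnitCircle : Type := AddCircle (2 * π)

/-- Normalized Haar (Lebesgue) measure on the circle. -/
abbrev μc : Measure UnitCircle := AddCircle.haarAddCircle

/-- The space `L²(𝕋)`. -/
abbrev L2T : Type := Lp ℂ 2 μc

/-- The Hardy space `H²`, the closed span of `{eⁱⁿᵗ : n ≥ 0}` inside `L²(𝕋)`. -/
def H2 : Submodule ℂ L2T :=
  (Submodule.span ℂ (Set.range fun n : ℕ => (fourierLp 2 (n : ℤ) : L2T))).topologicalClosure

instance : CompleteSpace H2 :=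
  IsClosed.completeSpace_coe (hs := Submodule.isClosed_topologicalClosure _)

/-- The orthogonal projection `P : L²(𝕋) → H²`. -/
def PH2 : L2T →L[ℂ] H2 := H2.orthogonalProjectionOnto

/-- Multiplication of an `L²` function by an essentially bounded symbol. -/
def symbMul (g : UnitCircle → ℂ) (hg : MemLp g ∞ μc) (f : L2T) : L2T :=
  ((Lp.memLp f).smul (r := 2) hg).toLp (g • ⇑f)

/-- The Toeplitz operator `T_g f = P(gf)`, viewed as a map `L²(𝕋) → L²(𝕋)`
(its restriction to `H²` is the classical Toeplitz operator). -/
def Toeplitz (g : UnitCircle → ℂ) (hg : MemLp g ∞ μc) (f : L2T) : L2T :=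
  (PH2 (symbMul g hg f) : L2T)

/-- The boundary coordinate function `z = eⁱᵗ` on the circle. -/
def zfun : UnitCircle → ℂ := fun x => fourier 1 x

lemma zfun_memLinfty : MemLp zfun ∞ μc := by
  refine memLp_top_of_bound ((fourier 1).continuous.aestronglyMeasurable) 1 ?_
  filter_upwards with x
  simp [zfun, Circle.norm_coe]

lemma conj_zfun_memLinfty : MemLp (fun x => conj (zfun x)) ∞ μc := by
  refine memLp_top_of_bound (Continuous.aestronglyMeasurable (Complex.continuous_conj.comp ((fourier 1).continuous))) 1 ?_
  filter_upwards with x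
  simp [zfun, Circle.norm_coe]

/-- The backward shift `S* = T_{z̄}` on `L²`; its restriction to `H²` is the classical
backward shift `(S^*f)(z) = (f(z)-f(0))/z`. -/
def Sstar (f : L2T) : L2T := Toeplitz (fun x => conj (zfun x)) conj_zfun_memLinfty f

/-- Evaluation of (the analytic extension of) `f` at the origin: the mean value `f(0) = ∫ f`. -/
def ev0 (f : L2T) : ℂ := ∫ x, f x ∂μc

/-- The constant function `1` as an element of `L²(𝕋)` (it is `e⁰`). -/
def onefun : L2T := fourierLp 2 (0 : ℤ)

lemma zpow_memLinfty (m : ℕ) : MemLp (fun x => zfun x ^ m) ∞ μc := by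
  refine memLp_top_of_bound (Continuous.aestronglyMeasurable (by
    exact Continuous.pow (fourier 1).continuous m)) 1 ?_
  filter_upwards with x
  simp [zfun, Circle.norm_coe]

/-- An essentially bounded symbol is in particular square-integrable: the associated `L²`
element. -/
def toL2 (g : UnitCircle → ℂ) (hg : MemLp g ∞ μc) : L2T :=
  (hg.mono_exponent le_top).toLp g

/-- A bounded symbol `g` is *analytic* (i.e. belongs to `H^∞`) iff multiplication by `g`
preserves the Hardy space `H²`. -/
def IsAnalytic (g : UnitCircle → ℂ) (hg : MemLp g ∞ μc) : Prop :=
  ∀ f : L2T, f ∈ H2 → symbMul g hg f ∈ H2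

/-- A bounded symbol is *inner* if it is analytic and unimodular a.e. on the circle. -/
def IsInner (g : UnitCircle → ℂ) (hg : MemLp g ∞ μc) : Prop :=
  IsAnalytic g hg ∧ ∀ᵐ x ∂μc, ‖g x‖ = 1

/-- The subspace `θ·H²` of `L²(𝕋)`. -/
def mulH2 (θ : UnitCircle → ℂ) (hθ : MemLp θ ∞ μc) : Submodule ℂ L2T :=
  Submodule.span ℂ {f : L2T | ∃ h ∈ H2, f = symbMul θ hθ h}

/-- The model space `K_θ = H² ⊖ θH²`. -/
def Kmodel (θ : UnitCircle → ℂ) (hθ : MemLp θ ∞ μc) : Submodule ℂ L2T :=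
  H2 ⊓ (mulH2 θ hθ)ᗮ

instance (θ : UnitCircle → ℂ) (hθ : MemLp θ ∞ μc) : CompleteSpace (Kmodel θ hθ) := by
  refine IsClosed.completeSpace_coe (hs := ?_)
  have : ((Kmodel θ hθ : Submodule ℂ L2T) : Set L2T)
      = (H2 : Set L2T) ∩ ((mulH2 θ hθ)ᗮ : Set L2T) := rfl
  rw [this]
  exact (Submodule.isClosed_topologicalClosure _).inter (Submodule.isClosed_orthogonal _)

/-- An element `u ∈ H²` is *outer* if the polynomial multiples of `u` are dense in `H²`
(Beurling). -/
def IsOuterL2 (uL : L2T) : Prop :=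
  (Submodule.span ℂ
    (Set.range fun n : ℕ => symbMul (fun x => zfun x ^ n) (zpow_memLinfty n) uL)).topologicalClosure
    = H2

open scoped ComplexInnerProductSpace

instance (U : Submodule ℂ L2T) : CompleteSpace (H2 ⊓ Uᗮ : Submodule ℂ L2T) := by
  refine IsClosed.completeSpace_coe (hs := ?_)
  have : ((H2 ⊓ Uᗮ : Submodule ℂ L2T) : Set L2T) = (H2 : Set L2T) ∩ (Uᗮ : Set L2T) := rfl
  rw [this]
  exact (Submodule.isClosed_topologicalClosure _).inter (Submodule.isClosed_orthogonal _)

/-! ### Auxiliary lemmas -/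

section Aux

lemma inner_fourierLp_eq (m : ℤ) (f : L2T) :
    ⟪(fourierLp 2 m : L2T), f⟫ = fourierCoeff (⇑f) m := by
  rw [← fourierBasis_repr, HilbertBasis.repr_apply_apply, coe_fourierBasis]

lemma symbMul_coeFn (g : UnitCircle → ℂ) (hg : MemLp g ∞ μc) (f : L2T) :
    ⇑(symbMul g hg f) =ᵐ[μc] fun x => g x * f x :=
  ((Lp.memLp f).smul (r := 2) hg).coeFn_toLp

lemma symbMul_add (g : UnitCircle → ℂ) (hg : MemLp g ∞ μc) (f₁ f₂ : L2T) :
    symbMul g hg (f₁ + f₂) = symbMul g hg f₁ + symbMul g hg f₂ := by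
  apply Lp.ext
  filter_upwards [symbMul_coeFn g hg (f₁ + f₂), symbMul_coeFn g hg f₁,
    symbMul_coeFn g hg f₂, Lp.coeFn_add f₁ f₂,
    Lp.coeFn_add (symbMul g hg f₁) (symbMul g hg f₂)] with x h0 h1 h2 h3 h4
  rw [h0, h4, Pi.add_apply, h1, h2, h3, Pi.add_apply, mul_add]

lemma symbMul_smul (g : UnitCircle → ℂ) (hg : MemLp g ∞ μc) (c : ℂ) (f : L2T) :
    symbMul g hg (c • f) = c • symbMul g hg f := by
  apply Lp.ext
  filter_upwards [symbMul_coeFn g hg (c • f), symbMul_coeFn g hg f,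
    Lp.coeFn_smul c f, Lp.coeFn_smul c (symbMul g hg f)] with x h0 h1 h2 h3
  rw [h0, h3, Pi.smul_apply, h1, h2, Pi.smul_apply, smul_eq_mul, smul_eq_mul]
  ring

/-- `symbMul` as a linear map. -/
def symbMulL (g : UnitCircle → ℂ) (hg : MemLp g ∞ μc) : L2T →ₗ[ℂ] L2T where
  toFun := symbMul g hg
  map_add' := symbMul_add g hg
  map_smul' := symbMul_smul g hg

@[simp] lemma symbMulL_apply (g : UnitCircle → ℂ) (hg : MemLp g ∞ μc) (f : L2T) :
    symbMulL g hg f = symbMul g hg f := rfl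

lemma symbMul_zero (g : UnitCircle → ℂ) (hg : MemLp g ∞ μc) :
    symbMul g hg 0 = 0 := map_zero (symbMulL g hg)

lemma symbMul_sub (g : UnitCircle → ℂ) (hg : MemLp g ∞ μc) (f₁ f₂ : L2T) :
    symbMul g hg (f₁ - f₂) = symbMul g hg f₁ - symbMul g hg f₂ :=
  map_sub (symbMulL g hg) f₁ f₂

lemma coeff_symbMul_conjz (f : L2T) (m : ℤ) :
    fourierCoeff ⇑(symbMul (fun x => conj (zfun x)) conj_zfun_memLinfty f) m
      = fourierCoeff (⇑f) (m + 1) := by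
  rw [fourierCoeff_congr_ae (symbMul_coeFn _ _ f)]
  refine integral_congr_ae (Filter.Eventually.of_forall fun x => ?_)
  have h1 : conj (zfun x) = fourier (-1 : ℤ) x := by
    rw [zfun, fourier_neg]
  have h2 : (-m : ℤ) + (-1) = -(m + 1) := by ring
  show fourier (-m) x • (conj (zfun x) * f x) = fourier (-(m + 1)) x • (f x : ℂ)
  rw [smul_eq_mul, smul_eq_mul, h1, ← mul_assoc, ← fourier_add, h2]

lemma ev0_eq_coeff (f : L2T) : ev0 f = fourierCoeff (⇑f) 0 := by
  refine (integral_congr_ae (Filter.Eventually.of_forall fun x => ?_)).symm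
  rw [neg_zero, fourier_zero, one_smul]

lemma fourierLp_mem_H2 (n : ℕ) : (fourierLp 2 (n : ℤ) : L2T) ∈ H2 :=
  Submodule.le_topologicalClosure _ (Submodule.subset_span ⟨n, rfl⟩)

lemma inner_eq_zero_on_H2 {φ : L2T}
    (hφ : ∀ n : ℕ, ⟪φ, (fourierLp 2 (n : ℤ) : L2T)⟫ = 0)
    {f : L2T} (hf : f ∈ H2) : ⟪φ, f⟫ = 0 := by
  have hle : H2 ≤ LinearMap.ker (innerSL ℂ φ : L2T →ₗ[ℂ] ℂ) := by
    unfold H2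
    apply Submodule.topologicalClosure_minimal
    · rw [Submodule.span_le]
      rintro - ⟨n, rfl⟩
      simpa [LinearMap.mem_ker] using hφ n
    · exact ContinuousLinearMap.isClosed_ker (innerSL ℂ φ)
  simpa [LinearMap.mem_ker] using hle hf

lemma coeff_zero_of_mem_H2 {f : L2T} (hf : f ∈ H2) {m : ℤ} (hm : m < 0) :
    fourierCoeff (⇑f) m = 0 := by
  rw [← inner_fourierLp_eq]
  exact inner_eq_zero_on_H2
    (fun n => orthonormal_fourier.2 (show m ≠ (n : ℤ) by omega)) hf

lemma mem_H2_of_coeff {f : L2T} (h : ∀ m : ℤ, m < 0 → fourierCoeff (⇑f) m = 0) :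
    f ∈ H2 := by
  have hs := hasSum_fourier_series_L2 f
  have hcl : IsClosed (H2 : Set L2T) := Submodule.isClosed_topologicalClosure _
  refine IsClosed.mem_of_tendsto hcl hs (Filter.Eventually.of_forall fun s => ?_)
  refine Submodule.sum_mem _ fun i _ => ?_
  rcases lt_or_ge i 0 with hi | hi
  · rw [h i hi, zero_smul]; exact H2.zero_mem
  · have hi' : i = ((i.toNat : ℕ) : ℤ) := (Int.toNat_of_nonneg hi).symm
    rw [hi']
    exact Submodule.smul_mem _ _ (fourierLp_mem_H2 _)

lemma mem_H2_orth {f : L2T}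
    (h : ∀ n : ℕ, ⟪f, (fourierLp 2 (n : ℤ) : L2T)⟫ = 0) : f ∈ H2ᗮ := by
  rw [Submodule.mem_orthogonal']
  exact fun u hu => inner_eq_zero_on_H2 h hu

lemma PH2_of_mem {f : L2T} (hf : f ∈ H2) : (PH2 f : L2T) = f :=
  H2.starProjection_eq_self_iff.mpr hf

lemma PH2_of_orth {f : L2T} (hf : f ∈ H2ᗮ) : (PH2 f : L2T) = 0 := by
  show ((H2.orthogonalProjectionOnto f : H2) : L2T) = 0
  rw [Submodule.orthogonalProjectionOnto_apply_of_mem_orthogonal hf,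
    Submodule.coe_zero]

lemma onefun_mem_H2 : onefun ∈ H2 := by
  simpa [onefun] using fourierLp_mem_H2 0

lemma theta_coeff (θ : UnitCircle → ℂ) (hθ : MemLp θ ∞ μc)
    (han : IsAnalytic θ hθ) {m : ℤ} (hm : m < 0) : fourierCoeff θ m = 0 := by
  have h1 : symbMul θ hθ onefun ∈ H2 := han onefun onefun_mem_H2
  have h2 : ⇑(symbMul θ hθ onefun) =ᵐ[μc] θ := by
    filter_upwards [symbMul_coeFn θ hθ onefun,
      coeFn_fourierLp (T := 2 * π) 2 0] with x hx hy
    rw [hx]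
    show θ x * (fourierLp 2 (0 : ℤ) : L2T) x = θ x
    rw [hy, fourier_zero, mul_one]
  rw [← congrFun (fourierCoeff_congr_ae h2) m]
  exact coeff_zero_of_mem_H2 h1 hm

lemma conj_theta_em1_orth (θ : UnitCircle → ℂ) (hθ : MemLp θ ∞ μc)
    (hθc : MemLp (fun x => conj (θ x)) ∞ μc) (han : IsAnalytic θ hθ) :
    symbMul (fun x => conj (θ x)) hθc (fourierLp 2 (-1 : ℤ) : L2T) ∈ H2ᗮ := by
  refine mem_H2_orth fun n => ?_
  rw [← inner_conj_symm, inner_fourierLp_eq]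
  have h1 : ⇑(symbMul (fun x => conj (θ x)) hθc (fourierLp 2 (-1 : ℤ) : L2T))
      =ᵐ[μc] fun x => conj (θ x) * fourier (-1 : ℤ) x := by
    filter_upwards [symbMul_coeFn (fun x => conj (θ x)) hθc _,
      coeFn_fourierLp (T := 2 * π) 2 (-1 : ℤ)] with x hx hy
    rw [hx, hy]
  rw [fourierCoeff_congr_ae h1]
  have h2 : fourierCoeff (fun x => conj (θ x) * fourier (-1 : ℤ) x) n
      = conj (fourierCoeff θ (-((n : ℤ) + 1))) := by
    rw [show fourierCoeff θ (-((n : ℤ) + 1))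
        = ∫ x, fourier ((n : ℤ) + 1) x • θ x ∂μc by rw [fourierCoeff, neg_neg],
      ← integral_conj]
    refine integral_congr_ae (Filter.Eventually.of_forall fun x => ?_)
    calc fourier (-(n : ℤ)) x • (conj (θ x) * fourier (-1 : ℤ) x)
        = conj (fourier (n : ℤ) x) * (conj (θ x) * conj (fourier (1 : ℤ) x)) := by
          rw [smul_eq_mul, fourier_neg, fourier_neg]
      _ = conj (fourier (n : ℤ) x * (θ x * fourier (1 : ℤ) x)) := by
          rw [← map_mul, ← map_mul]
      _ = conj (fourier ((n : ℤ) + 1) x • θ x) := by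
          rw [fourier_add, smul_eq_mul]
          congr 1
          ring
  rw [h2, theta_coeff θ hθ han (by omega), map_zero, map_zero]

lemma Sstar_eq_of_mem {v : L2T} (hv : v ∈ H2) :
    Sstar v = symbMul (fun x => conj (zfun x)) conj_zfun_memLinfty v
      - fourierCoeff (⇑v) 0 • (fourierLp 2 (-1 : ℤ) : L2T) := by
  set g := symbMul (fun x => conj (zfun x)) conj_zfun_memLinfty v with hgdef
  set c := fourierCoeff (⇑v) 0 with hcdef
  have hem1 : (fourierLp 2 (-1 : ℤ) : L2T) ∈ H2ᗮ := by
    refine mem_H2_orth fun n => ?_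
    rw [← inner_conj_symm, orthonormal_fourier.2 (show (n : ℤ) ≠ -1 by omega), map_zero]
  have ha : g - c • (fourierLp 2 (-1 : ℤ) : L2T) ∈ H2 := by
    refine mem_H2_of_coeff fun m hm => ?_
    rw [← inner_fourierLp_eq, inner_sub_right, inner_smul_right,
      inner_fourierLp_eq, hgdef, coeff_symbMul_conjz]
    rcases eq_or_lt_of_le (show m ≤ -1 by omega) with hm1 | hm1
    · subst hm1
      have h1 : ⟪(fourierLp 2 (-1 : ℤ) : L2T), (fourierLp 2 (-1 : ℤ) : L2T)⟫ = 1 := by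
        simpa using (orthonormal_iff_ite.mp orthonormal_fourier (-1 : ℤ) (-1 : ℤ))
      rw [h1, mul_one, show (-1 : ℤ) + 1 = 0 by ring, ← hcdef, sub_self]
    · rw [coeff_zero_of_mem_H2 hv (by omega : m + 1 < 0),
        orthonormal_fourier.2 (show m ≠ -1 by omega), mul_zero, sub_zero]
  have hb : c • (fourierLp 2 (-1 : ℤ) : L2T) ∈ H2ᗮ := Submodule.smul_mem _ _ hem1
  have hg : g = (g - c • (fourierLp 2 (-1 : ℤ) : L2T)) + c • (fourierLp 2 (-1 : ℤ) : L2T) := by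
    abel
  show (PH2 g : L2T) = g - c • (fourierLp 2 (-1 : ℤ) : L2T)
  conv_lhs => rw [hg]
  rw [map_add, Submodule.coe_add, PH2_of_mem ha, PH2_of_orth hb, add_zero]

lemma toeplitz_conj_Sstar (θ : UnitCircle → ℂ) (hθ : MemLp θ ∞ μc)
    (hθc : MemLp (fun x => conj (θ x)) ∞ μc) (han : IsAnalytic θ hθ)
    {v : L2T} (hv : v ∈ H2) :
    Toeplitz (fun x => conj (θ x)) hθc (Sstar v)
      = (PH2 (symbMul (fun x => conj (θ x)) hθc
          (symbMul (fun x => conj (zfun x)) conj_zfun_memLinfty v)) : L2T) := by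
  show (PH2 (symbMul (fun x => conj (θ x)) hθc (Sstar v)) : L2T) = _
  rw [Sstar_eq_of_mem hv, symbMul_sub, symbMul_smul, PH2.map_sub, Submodule.coe_sub,
    PH2.map_smul, Submodule.coe_smul,
    PH2_of_orth (conj_theta_em1_orth θ hθ hθc han), smul_zero, sub_zero]

end Aux

/-- For `θ` inner and `Rₙh = θh + Σ ⟨h,uᵢ⟩vᵢ`, the kernel of `Rₙ` is nearly
`S*`-invariant with defect at most `n`, with defect space `F = span{T_θ̄(S*vᵢ)}`; explicitly,
for `h ∈ Ker Rₙ` with `h(0)=0` and `w = Σ ⟨h,u_k⟩ T_θ̄(S*v_k)`, one has `S*h + w ∈ Ker Rₙ`. -/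
theorem kernel_perturbed_analytic_toeplitz_nearly_Sstar_invariant
    (n : ℕ) (θ : UnitCircle → ℂ) (hθ : MemLp θ ∞ μc) (hin : IsInner θ hθ)
    (hθc : MemLp (fun x => conj (θ x)) ∞ μc)
    (u v : Fin n → L2T)
    (hu : ∀ i, u i ∈ H2) (huon : Orthonormal ℂ u)
    (hv : ∀ i, v i ∈ H2) (hvorth : ∀ i j, i ≠ j → ⟪v i, v j⟫ = 0) :
    Module.finrank ℂ
        (Submodule.span ℂ
          (Set.range fun i => Toeplitz (fun x => conj (θ x)) hθc (Sstar (v i)))) ≤ n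
    ∧ ∀ h ∈ H2, (Toeplitz θ hθ h + ∑ i, ⟪u i, h⟫ • v i = 0) → ev0 h = 0 →
        (∑ k, ⟪u k, h⟫ • Toeplitz (fun x => conj (θ x)) hθc (Sstar (v k))) ∈
            Submodule.span ℂ
              (Set.range fun i => Toeplitz (fun x => conj (θ x)) hθc (Sstar (v i)))
        ∧ Sstar h + (∑ k, ⟪u k, h⟫ • Toeplitz (fun x => conj (θ x)) hθc (Sstar (v k))) ∈ H2
        ∧ Toeplitz θ hθ (Sstar h + ∑ k, ⟪u k, h⟫ • Toeplitz (fun x => conj (θ x)) hθc (Sstar (v k)))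
            + ∑ i, ⟪u i, Sstar h + ∑ k, ⟪u k, h⟫ • Toeplitz (fun x => conj (θ x)) hθc (Sstar (v k))⟫ • v i
            = 0 := by
  constructor
  · classical
    have h1 : (Set.range fun i => Toeplitz (fun x => conj (θ x)) hθc (Sstar (v i)))
        = ↑(Finset.image (fun i => Toeplitz (fun x => conj (θ x)) hθc (Sstar (v i)))
            Finset.univ) := by
      simp
    have h2 := finrank_span_finset_le_card (R := ℂ)
      (Finset.image (fun i => Toeplitz (fun x => conj (θ x)) hθc (Sstar (v i))) Finset.univ)
    rw [Set.finrank] at h2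
    rw [h1]
    exact le_trans h2 (le_trans Finset.card_image_le (by simp))
  · intro h hh hker hev
    have hθh : symbMul θ hθ h ∈ H2 := hin.1 h hh
    have hT : Toeplitz θ hθ h = symbMul θ hθ h := PH2_of_mem hθh
    have hker' : symbMul θ hθ h = -∑ i, ⟪u i, h⟫ • v i := by
      rw [← hT]; exact eq_neg_of_add_eq_zero_left hker
    have hsh : symbMul (fun x => conj (zfun x)) conj_zfun_memLinfty h ∈ H2 := by
      refine mem_H2_of_coeff fun m hm => ?_
      rw [coeff_symbMul_conjz]
      rcases eq_or_lt_of_le (show m + 1 ≤ 0 by omega) with h0 | h0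
      · rw [h0, ← ev0_eq_coeff]; exact hev
      · exact coeff_zero_of_mem_H2 hh h0
    have hSh : Sstar h = symbMul (fun x => conj (zfun x)) conj_zfun_memLinfty h :=
      PH2_of_mem hsh
    have hmult : symbMul (fun x => conj (θ x)) hθc
        (symbMul (fun x => conj (zfun x)) conj_zfun_memLinfty (symbMul θ hθ h))
        = symbMul (fun x => conj (zfun x)) conj_zfun_memLinfty h := by
      apply Lp.ext
      filter_upwards [symbMul_coeFn (fun x => conj (θ x)) hθc
          (symbMul (fun x => conj (zfun x)) conj_zfun_memLinfty (symbMul θ hθ h)),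
        symbMul_coeFn (fun x => conj (zfun x)) conj_zfun_memLinfty (symbMul θ hθ h),
        symbMul_coeFn θ hθ h,
        symbMul_coeFn (fun x => conj (zfun x)) conj_zfun_memLinfty h,
        hin.2] with x e1 e2 e3 e4 hx
      rw [e1, e2, e3, e4]
      have h5 : conj (θ x) * θ x = 1 := by
        have h6 : Complex.normSq (θ x) = 1 := by
          rw [Complex.normSq_eq_norm_sq, hx, one_pow]
        rw [mul_comm, Complex.mul_conj, h6, Complex.ofReal_one]
      calc conj (θ x) * (conj (zfun x) * (θ x * h x))
          = (conj (θ x) * θ x) * (conj (zfun x) * h x) := by ring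
        _ = conj (zfun x) * h x := by rw [h5, one_mul]
    have hlin2 : symbMul (fun x => conj (zfun x)) conj_zfun_memLinfty (symbMul θ hθ h)
        = -∑ i, ⟪u i, h⟫ • symbMul (fun x => conj (zfun x)) conj_zfun_memLinfty (v i) := by
      rw [hker']
      show symbMulL (fun x => conj (zfun x)) conj_zfun_memLinfty _ = _
      simp only [map_neg, map_sum, LinearMap.map_smul, symbMulL_apply]
    have hmain : symbMul (fun x => conj (zfun x)) conj_zfun_memLinfty h
        = -∑ i, ⟪u i, h⟫ • symbMul (fun x => conj (θ x)) hθc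
            (symbMul (fun x => conj (zfun x)) conj_zfun_memLinfty (v i)) := by
      rw [← hmult, hlin2]
      show symbMulL (fun x => conj (θ x)) hθc _ = _
      simp only [map_neg, map_sum, LinearMap.map_smul, symbMulL_apply]
    have key : Sstar h
        = -∑ k, ⟪u k, h⟫ • Toeplitz (fun x => conj (θ x)) hθc (Sstar (v k)) := by
      have h1 : Sstar h
          = (PH2 (symbMul (fun x => conj (zfun x)) conj_zfun_memLinfty h) : L2T) := rfl
      rw [h1, hmain, map_neg, Submodule.coe_neg, map_sum, Submodule.coe_sum]
      congr 1
      refine Finset.sum_congr rfl fun k _ => ?_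
      rw [PH2.map_smul, Submodule.coe_smul,
        ← toeplitz_conj_Sstar θ hθ hθc hin.1 (hv k)]
    have key0 : Sstar h
        + ∑ k, ⟪u k, h⟫ • Toeplitz (fun x => conj (θ x)) hθc (Sstar (v k)) = 0 := by
      rw [key]; exact neg_add_cancel _
    refine ⟨?_, ?_, ?_⟩
    · exact Submodule.sum_mem _ fun k _ =>
        Submodule.smul_mem _ _ (Submodule.subset_span ⟨k, rfl⟩)
    · rw [key0]; exact H2.zero_mem
    · rw [key0]
      simp [Toeplitz, symbMul_zero, inner_zero_right]
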